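/- Let w be a word over Fin n, let c be canonical with c ~ w, and set q_m = (F_w ⋆) m for m : Fin n. Then for every k with 1 ≤ k ≤ n, the nested join join q_{k-1} (join q_{k-2} (⋯ (join q_1 q_0) ⋯)) equals the longest suffix of c whose first letter is strictly less than k, or [] if no letter strictly less than k occurs in c. (In the paper's 1-indexed notation: [p_k,[…,[p_2,p_1]…]] = T_{{1,…,k}} Can w.) -/

import Mathlib

variable {n : ℕ}

/-- Generating relation of the Kiselman congruence on words over `Fin n`. -/
inductive KisStep : List (Fin n) → List (Fin n) → Prop
  | idem : ∀ (u v : List (Fin n)) (i : Fin n),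
      KisStep (u ++ [i, i] ++ v) (u ++ [i] ++ v)
  | left : ∀ (u v : List (Fin n)) (i j : Fin n), i < j →
      KisStep (u ++ [i, j, i] ++ v) (u ++ [i, j] ++ v)
  | right : ∀ (u v : List (Fin n)) (i j : Fin n), i < j →
      KisStep (u ++ [j, i, j] ++ v) (u ++ [i, j] ++ v)

/-- The Kiselman congruence: smallest equivalence relation containing `KisStep`. -/
def KisEquiv (x y : List (Fin n)) : Prop := Relation.EqvGen KisStep x y

/-- An infix `[i] ++ u ++ [i]` is special if `u` contains a letter `> i` and a letter `< i`. -/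
def Special (i : Fin n) (u : List (Fin n)) : Prop :=
  (∃ j ∈ u, i < j) ∧ (∃ j ∈ u, j < i)

/-- A word is canonical if all its infixes of the form `[i] ++ u ++ [i]` are special. -/
def Canonical (w : List (Fin n)) : Prop :=
  ∀ (i : Fin n) (u : List (Fin n)), ([i] ++ u ++ [i]) <:+: w → Special i u

/-- Delete all letters strictly smaller than `k`. -/
def filterGE (k : Fin n) (w : List (Fin n)) : List (Fin n) :=
  w.filter (fun a => decide (k ≤ a))

/-- `trunc i w` is the longest suffix of `w` with head `i`, or `[]` if `i ∉ w`. -/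
def trunc (i : Fin n) : List (Fin n) → List (Fin n)
  | [] => []
  | a :: t => if a = i then a :: t else trunc i t

/-- Longest suffix of `w` whose head is `< k` (as a natural number), or `[]`. -/
def truncLtN (k : ℕ) : List (Fin n) → List (Fin n)
  | [] => []
  | a :: t => if (a : ℕ) < k then a :: t else truncLtN k t

/-- `join u v = u⁺ ++ v`, where `u⁻` is the longest suffix of `u` that is a sublist of `v`. -/
def join : List (Fin n) → List (Fin n) → List (Fin n)
  | [], v => v
  | a :: t, v => if (a :: t).Sublist v then v else a :: join t v

/-- The local update function at vertex `i` of the update system `S_n^⋆`. -/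
def Fstep (i : Fin n) (s : Fin n → List (Fin n)) : Fin n → List (Fin n) :=
  Function.update s i
    (i :: List.foldr join []
      ((((List.finRange n).filter (fun j => decide (i < j))).reverse).map s))

/-- The evolution induced by a word (rightmost letter acts first). -/
def Fword (w : List (Fin n)) (s : Fin n → List (Fin n)) : Fin n → List (Fin n) :=
  w.foldr Fstep s

/-- The initial system state `⋆`. -/
def starState : Fin n → List (Fin n) := fun _ => []

/-!
The states `F_w ⋆` depend only on the Kiselman class of `w`, since the local functions satisfy
`F_i F_i = F_i` and `F_i F_j F_i = F_i F_j = F_j F_i F_j` for `i < j`; so `w` may be replaced by the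
canonical word `c`. Write `J_{[m,k)}(s)` for the nested join of the coordinates `m ≤ j < k` of a
state `s`, and `T_{[m,k)} u` for the longest suffix of `u` with head in `[m,k)`. By induction on
`c`, for all `m` and `k` at once, `J_{[m,k)}(F_c ⋆)` is obtained from `T_{[m,k)} c` by a
left-to-right sweep that drops the letters `< m` and every letter `x` kept before with only
letters `> x` kept since. For `c = b u` with `m ≤ b < k` we have
`J_{[m,k)}(F_c ⋆) = join (b J_{[b+1,n)}(F_u ⋆)) J_{[m,b)}(F_u ⋆)`. Because every factor `x v x`
of `c` has a letter `> x` in `v`, no suffix of the first argument that begins before its sweep of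
`T_{[m,b)} u` embeds into the second, so the join is `b`, then the sweep of the part of `u` before
`T_{[m,b)} u`, then `J_{[m,b)}(F_u ⋆)`. For `m = 0` the sweep keeps every letter, because every
factor `x v x` of `c` also has a letter `< x` in `v`.
-/

open scoped List

theorem join_of_sublist {u v : List (Fin n)} (h : u <+ v) : join u v = v := by
  cases u with
  | nil => rfl
  | cons a t => simp [join, h]

theorem join_cons_of_not_sublist {a : Fin n} {t v : List (Fin n)} (h : ¬ a :: t <+ v) :
    join (a :: t) v = a :: join t v := by
  simp [join, h]

theorem sublist_join_left (u v : List (Fin n)) : u <+ join u v := by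
  induction u with
  | nil => exact List.nil_sublist _
  | cons a t ih =>
    by_cases h : a :: t <+ v
    · rwa [join_of_sublist h]
    · rw [join_cons_of_not_sublist h]
      exact ih.cons_cons a

theorem sublist_join_right (u v : List (Fin n)) : v <+ join u v := by
  induction u with
  | nil => exact List.Sublist.refl v
  | cons a t ih =>
    by_cases h : a :: t <+ v
    · rw [join_of_sublist h]
    · rw [join_cons_of_not_sublist h]
      exact ih.trans (List.sublist_cons_self a _)

theorem join_append_of_sublist {α β v : List (Fin n)} (hβ : β <+ v)
    (hα : ∀ α₁ x α₂, α = α₁ ++ x :: α₂ → ¬ x :: (α₂ ++ β) <+ v) :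
    join (α ++ β) v = α ++ v := by
  induction α with
  | nil => exact join_of_sublist hβ
  | cons x α ih =>
    rw [List.cons_append, join_cons_of_not_sublist (hα [] x α rfl),
      ih fun α₁ y α₂ h => hα (x :: α₁) y α₂ (by rw [h, List.cons_append]), List.cons_append]

theorem sublist_foldr_join_of_mem {x : List (Fin n)} {l : List (List (Fin n))} (h : x ∈ l) :
    x <+ l.foldr join [] := by
  induction l with
  | nil => cases h
  | cons y l ih =>
    rcases List.mem_cons.1 h with rfl | h
    · exact sublist_join_left _ _
    · exact (ih h).trans (sublist_join_right _ _)

theorem foldr_join_eq_of_forall_sublist {l : List (List (Fin n))} {v : List (Fin n)}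
    (h : ∀ x ∈ l, x <+ v) : l.foldr join v = v := by
  induction l with
  | nil => rfl
  | cons y l ih =>
    rw [List.foldr_cons, ih fun x hx => h x (List.mem_cons_of_mem y hx)]
    exact join_of_sublist (h y List.mem_cons_self)

def coordsIco (m k : ℕ) : List (Fin n) :=
  (List.finRange n).filter fun j => decide (m ≤ (j : ℕ) ∧ (j : ℕ) < k)

theorem coordsIco_eq_append {m k : ℕ} {a : Fin n} (hm : m ≤ a) (hk : a < k) :
    (coordsIco m k : List (Fin n)) = coordsIco m a ++ a :: coordsIco (a + 1) k := by
  have hsorted := List.pairwise_lt_finRange n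
  refine (hsorted.filter _).eq_of_mem_iff ?_ fun j => ?_
  · simp only [coordsIco, List.pairwise_append, List.pairwise_cons, List.mem_filter,
      List.mem_cons, List.mem_finRange, true_and, decide_eq_true_eq]
    refine ⟨hsorted.filter _, ⟨?_, hsorted.filter _⟩, ?_⟩
    · intro j hj
      rw [Fin.lt_def]
      omega
    · rintro i hi j (rfl | hj) <;> rw [Fin.lt_def] <;> omega
  · simp only [coordsIco, List.mem_append, List.mem_cons, List.mem_filter, List.mem_finRange,
      true_and, decide_eq_true_eq, Fin.ext_iff]
    omega

/-- The nested join `join (s (k-1)) (join (s (k-2)) (⋯ (s m)))` of the coordinates `m ≤ j < k`. -/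
def joinRange (m k : ℕ) (s : Fin n → List (Fin n)) : List (Fin n) :=
  ((coordsIco m k).reverse.map s).foldr join []

theorem joinRange_congr {m k : ℕ} {s s' : Fin n → List (Fin n)}
    (h : ∀ j : Fin n, m ≤ j → (j : ℕ) < k → s j = s' j) : joinRange m k s = joinRange m k s' := by
  refine congrArg (List.foldr join []) (List.map_congr_left fun j hj => ?_)
  simp only [coordsIco, List.mem_reverse, List.mem_filter, decide_eq_true_eq] at hj
  exact h j hj.2.1 hj.2.2

theorem sublist_joinRange {m k : ℕ} {j : Fin n} (hm : m ≤ j) (hk : (j : ℕ) < k)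
    (s : Fin n → List (Fin n)) : s j <+ joinRange m k s :=
  sublist_foldr_join_of_mem <| List.mem_map_of_mem <| List.mem_reverse.2 <|
    List.mem_filter.2 ⟨List.mem_finRange j, by simp [hm, hk]⟩

theorem joinRange_eq_join_of_sublist {m k : ℕ} {a : Fin n} (hm : m ≤ a) (hk : a < k)
    {s : Fin n → List (Fin n)} (h : ∀ j : Fin n, a < j → (j : ℕ) < k → s j <+ s a) :
    joinRange m k s = join (s a) (joinRange m a s) := by
  rw [joinRange, coordsIco_eq_append hm hk]
  simp only [List.reverse_append, List.reverse_cons, List.map_append, List.foldr_append,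
    List.map_cons, List.map_nil, List.foldr_cons, List.foldr_nil]
  refine foldr_join_eq_of_forall_sublist fun x hx => ?_
  simp only [coordsIco, List.mem_map, List.mem_reverse, List.mem_filter, List.mem_finRange,
    true_and, decide_eq_true_eq] at hx
  obtain ⟨j, hj, rfl⟩ := hx
  exact (h j (Fin.lt_def.2 hj.1) hj.2).trans (sublist_join_left _ _)

theorem joinRange_starState (m k : ℕ) : joinRange m k (starState : Fin n → List (Fin n)) = [] :=
  foldr_join_eq_of_forall_sublist fun x hx => by
    obtain ⟨j, -, rfl⟩ := List.mem_map.1 hx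
    exact List.Sublist.refl _

theorem Fstep_apply_of_ne {i j : Fin n} (h : j ≠ i) (s : Fin n → List (Fin n)) :
    Fstep i s j = s j :=
  Function.update_of_ne h _ s

theorem Fstep_apply_self (i : Fin n) (s : Fin n → List (Fin n)) :
    Fstep i s i = i :: joinRange (i + 1) n s := by
  rw [Fstep, Function.update_self, joinRange, coordsIco]
  congr 4
  refine List.filter_congr fun j _ => ?_
  simp only [Fin.lt_def, decide_eq_decide]
  omega

theorem Fstep_apply_self_congr {i : Fin n} {s s' : Fin n → List (Fin n)}
    (h : ∀ j, i < j → s j = s' j) : Fstep i s i = Fstep i s' i := by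
  rw [Fstep_apply_self, Fstep_apply_self,
    joinRange_congr fun j hj _ => h j (Fin.lt_def.2 hj)]

theorem Fstep_congr {i : Fin n} {s s' : Fin n → List (Fin n)} (h : ∀ j, j ≠ i → s j = s' j) :
    Fstep i s = Fstep i s' := by
  funext l
  by_cases hl : l = i
  · subst hl
    exact Fstep_apply_self_congr fun j hj => h j hj.ne'
  · rw [Fstep_apply_of_ne hl, Fstep_apply_of_ne hl, h l hl]

theorem Fstep_idem (i : Fin n) (s : Fin n → List (Fin n)) : Fstep i (Fstep i s) = Fstep i s :=
  Fstep_congr fun _ hj => Fstep_apply_of_ne hj s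

theorem Fstep_Fstep_Fstep_left {i j : Fin n} (hij : i < j) (s : Fin n → List (Fin n)) :
    Fstep i (Fstep j (Fstep i s)) = Fstep i (Fstep j s) := by
  refine Fstep_congr fun l hl => ?_
  by_cases hlj : l = j
  · subst hlj
    exact Fstep_apply_self_congr fun j' hj' => Fstep_apply_of_ne (hij.trans hj').ne' s
  · rw [Fstep_apply_of_ne hlj, Fstep_apply_of_ne hlj, Fstep_apply_of_ne hl]

theorem Fstep_Fstep_Fstep_right {i j : Fin n} (hij : i < j) (s : Fin n → List (Fin n)) :
    Fstep j (Fstep i (Fstep j s)) = Fstep i (Fstep j s) := by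
  funext l
  by_cases hlj : l = j
  · subst hlj
    rw [Fstep_apply_self_congr (s' := Fstep l s) fun j' hj' =>
        Fstep_apply_of_ne (hij.trans hj').ne' _,
      Fstep_idem, Fstep_apply_of_ne hij.ne']
  · rw [Fstep_apply_of_ne hlj]

theorem Fword_append (u v : List (Fin n)) (s : Fin n → List (Fin n)) :
    Fword (u ++ v) s = Fword u (Fword v s) :=
  List.foldr_append ..

theorem Fword_eq_of_kisStep {u v : List (Fin n)} (h : KisStep u v) (s : Fin n → List (Fin n)) :
    Fword u s = Fword v s := by
  cases h with
  | idem u v i =>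
    simp only [Fword_append]
    exact congrArg (Fword u) (Fstep_idem i _)
  | left u v i j hij =>
    simp only [Fword_append]
    exact congrArg (Fword u) (Fstep_Fstep_Fstep_left hij _)
  | right u v i j hij =>
    simp only [Fword_append]
    exact congrArg (Fword u) (Fstep_Fstep_Fstep_right hij _)

theorem Fword_eq_of_kisEquiv {u v : List (Fin n)} (h : KisEquiv u v) (s : Fin n → List (Fin n)) :
    Fword u s = Fword v s := by
  induction h with
  | rel _ _ h => exact Fword_eq_of_kisStep h s
  | refl => rfl
  | symm _ _ _ ih => exact ih.symm
  | trans _ _ _ _ _ ih₁ ih₂ => exact ih₁.trans ih₂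

theorem joinRange_Fstep_of_mem {m k : ℕ} {a : Fin n} (hm : m ≤ a) (hk : a < k)
    (s : Fin n → List (Fin n)) :
    joinRange m k (Fstep a s) = join (a :: joinRange (a + 1) n s) (joinRange m a s) := by
  rw [joinRange_eq_join_of_sublist hm hk, Fstep_apply_self,
    joinRange_congr fun j _ hj => Fstep_apply_of_ne (Fin.ne_of_lt hj) s]
  intro j haj _
  rw [Fstep_apply_of_ne haj.ne', Fstep_apply_self]
  exact (sublist_joinRange haj j.isLt s).trans (List.sublist_cons_self _ _)

theorem joinRange_Fstep_of_not_mem {m k : ℕ} {a : Fin n} (ha : ¬ (m ≤ a ∧ (a : ℕ) < k))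
    (s : Fin n → List (Fin n)) : joinRange m k (Fstep a s) = joinRange m k s :=
  joinRange_congr fun j hm hk => Fstep_apply_of_ne (by rintro rfl; exact ha ⟨hm, hk⟩) s

def arm (S : Fin n → Bool) (x : Fin n) : Fin n → Bool :=
  fun y => if y < x then S y else decide (y = x)

/-- A left-to-right pass that drops the letters `< τ` and the armed letters: `S y` records that
`y` was kept before with only letters `> y` kept since, and for such `v` we have `y v y ~ y v`. -/
def sweep (τ : ℕ) (S : Fin n → Bool) : List (Fin n) → List (Fin n)
  | [] => []
  | x :: r => if (x : ℕ) < τ ∨ S x then sweep τ S r else x :: sweep τ (arm S x) r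

def sweepState (τ : ℕ) (S : Fin n → Bool) : List (Fin n) → Fin n → Bool
  | [] => S
  | x :: r => if (x : ℕ) < τ ∨ S x then sweepState τ S r else sweepState τ (arm S x) r

theorem arm_apply_of_lt {S : Fin n → Bool} {x y : Fin n} (h : x < y) : arm S x y = false := by
  simp [arm, h.not_gt, h.ne']

theorem sweep_append (τ : ℕ) (S : Fin n → Bool) (u v : List (Fin n)) :
    sweep τ S (u ++ v) = sweep τ S u ++ sweep τ (sweepState τ S u) v := by
  induction u generalizing S with
  | nil => rfl
  | cons x u ih =>
    by_cases hx : (x : ℕ) < τ ∨ S x <;> simp [sweep, sweepState, hx, ih]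

theorem arm_congr {τ : ℕ} {S S' : Fin n → Bool} (h : ∀ y : Fin n, τ ≤ y → S y = S' y)
    (x : Fin n) : ∀ y : Fin n, τ ≤ y → arm S x y = arm S' x y := by
  intro y hy
  simp only [arm]
  split_ifs
  exacts [h y hy, rfl]

theorem sweep_congr {τ : ℕ} {S S' : Fin n → Bool} (h : ∀ y : Fin n, τ ≤ y → S y = S' y)
    (w : List (Fin n)) : sweep τ S w = sweep τ S' w := by
  induction w generalizing S S' with
  | nil => rfl
  | cons x r ih =>
    have hx : ((x : ℕ) < τ ∨ S x) ↔ ((x : ℕ) < τ ∨ S' x) := by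
      by_cases hxτ : (x : ℕ) < τ
      · simp [hxτ]
      · simp [hxτ, h x (not_lt.1 hxτ)]
    by_cases hd : (x : ℕ) < τ ∨ S x
    · rw [sweep, if_pos hd, sweep, if_pos (hx.1 hd), ih h]
    · rw [sweep, if_neg hd, sweep, if_neg (mt hx.2 hd), ih (arm_congr h x)]

theorem sweep_sublist (τ : ℕ) (S : Fin n → Bool) (w : List (Fin n)) : sweep τ S w <+ w := by
  induction w generalizing S with
  | nil => exact List.nil_sublist _
  | cons x r ih =>
    rw [sweep]
    split_ifs
    exacts [(ih S).trans (List.sublist_cons_self x r), (ih _).cons_cons x]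

theorem sweep_sublist_sweep {m τ : ℕ} (hmτ : m ≤ τ) {S S' : Fin n → Bool}
    (h : ∀ y : Fin n, τ ≤ y → S' y → S y) (w : List (Fin n)) :
    sweep τ S w <+ sweep m S' w := by
  induction w generalizing S S' with
  | nil => exact List.nil_sublist _
  | cons x r ih =>
    by_cases hd : (x : ℕ) < τ ∨ S x
    · rw [sweep, if_pos hd, sweep]
      split_ifs
      · exact ih h
      · refine (ih fun y hy hy' => ?_).trans (List.sublist_cons_self x _)
        simp only [arm] at hy'
        split_ifs at hy' with hyx
        · exact h y hy hy'
        · obtain rfl : y = x := of_decide_eq_true hy'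
          exact hd.resolve_left (not_lt.2 hy)
    · obtain ⟨hxτ, hSx⟩ := not_or.1 hd
      have hd' : ¬ ((x : ℕ) < m ∨ S' x) := by
        rintro (hx | hx)
        · omega
        · exact hSx (h x (not_lt.1 hxτ) hx)
      rw [sweep, if_neg hd, sweep, if_neg hd']
      refine (ih fun y hy hy' => ?_).cons_cons x
      simp only [arm] at hy' ⊢
      split_ifs at hy' ⊢
      exacts [h y hy hy', hy']

theorem sweep_eq_of_armed {b : Fin n} {S : Fin n → Bool} (hb : S b) (w : List (Fin n)) :
    sweep b S w = sweep (b + 1) S w := by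
  induction w generalizing S with
  | nil => rfl
  | cons x r ih =>
    have hx : ((x : ℕ) < b ∨ S x) ↔ ((x : ℕ) < b + 1 ∨ S x) := by
      rcases lt_trichotomy x b with hxb | rfl | hxb
      · simp [Fin.lt_def.1 hxb, Nat.lt_succ_of_lt (Fin.lt_def.1 hxb)]
      · simp [hb]
      · simp [not_lt.2 (Nat.succ_le_of_lt (Fin.lt_def.1 hxb)), (Fin.lt_def.1 hxb).not_gt]
    by_cases hd : (x : ℕ) < b ∨ S x
    · rw [sweep, if_pos hd, sweep, if_pos (hx.1 hd), ih hb]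
    · have hbx : b < x := by
        rcases lt_trichotomy x b with hxb | rfl | hxb
        exacts [absurd (Or.inl (Fin.lt_def.1 hxb)) hd, absurd (Or.inr hb) hd, hxb]
      rw [sweep, if_neg hd, sweep, if_neg (mt hx.2 hd), ih (by simpa [arm, hbx] using hb)]

theorem sweep_eq_sweep_of_forall_not_mem_Ico {m τ : ℕ} (hmτ : m ≤ τ) {w : List (Fin n)}
    (hw : ∀ x ∈ w, ¬ (m ≤ (x : ℕ) ∧ (x : ℕ) < τ)) (S : Fin n → Bool) :
    sweep m S w = sweep τ S w := by
  induction w generalizing S with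
  | nil => rfl
  | cons x r ih =>
    have hx : ((x : ℕ) < m ∨ S x) ↔ ((x : ℕ) < τ ∨ S x) := by
      have := hw x List.mem_cons_self
      constructor <;> rintro (h | h) <;> first | exact Or.inr h | left; omega
    have ih := ih fun y hy => hw y (List.mem_cons_of_mem x hy)
    by_cases hd : (x : ℕ) < m ∨ S x
    · rw [sweep, if_pos hd, sweep, if_pos (hx.1 hd), ih]
    · rw [sweep, if_neg hd, sweep, if_neg (mt hx.2 hd), ih]

theorem sweepState_apply_of_forall_lt {τ : ℕ} {y : Fin n} {w : List (Fin n)}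
    (hw : ∀ x ∈ w, τ ≤ (x : ℕ) → y < x) (S : Fin n → Bool) : sweepState τ S w y = S y := by
  induction w generalizing S with
  | nil => rfl
  | cons x r ih =>
    have ih := ih fun z hz => hw z (List.mem_cons_of_mem x hz)
    rw [sweepState]
    split_ifs with hd
    · exact ih S
    · rw [ih, arm, if_pos (hw x List.mem_cons_self (by omega))]

theorem sweep_eq_sweep_bot {m : ℕ} {S : Fin n → Bool} {b : Fin n}
    (hS : ∀ y : Fin n, m ≤ y → y < b → S y = false) {w : List (Fin n)}
    (hw : ∀ h ∈ w.head?, m ≤ (h : ℕ) ∧ h < b) : sweep m S w = sweep m ⊥ w := by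
  cases w with
  | nil => rfl
  | cons h t =>
    obtain ⟨hmh, hhb⟩ := hw h rfl
    rw [sweep, if_neg (by simp [hS h hmh hhb, hmh]), sweep, if_neg (by simp [hmh])]
    refine congrArg _ (sweep_congr (fun y hy => ?_) t)
    simp only [arm]
    split_ifs with hyh
    · exact hS y hy (hyh.trans hhb)
    · rfl

theorem sweep_eq_append_cons {τ : ℕ} {S : Fin n → Bool} {w α β : List (Fin n)} {x : Fin n}
    (h : sweep τ S w = α ++ x :: β) :
    ∃ w₁ w₂ S', w = w₁ ++ x :: w₂ ∧ τ ≤ (x : ℕ) ∧ β = sweep τ (arm S' x) w₂ ∧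
      sweepState τ S w = sweepState τ (arm S' x) w₂ := by
  induction w generalizing S α with
  | nil => simp [sweep] at h
  | cons y r ih =>
    by_cases hd : (y : ℕ) < τ ∨ S y
    · rw [sweep, if_pos hd] at h
      obtain ⟨w₁, w₂, S', rfl, hx, hβ, hst⟩ := ih h
      exact ⟨y :: w₁, w₂, S', rfl, hx, hβ, by rw [sweepState, if_pos hd, hst]⟩
    · rw [sweep, if_neg hd] at h
      cases α with
      | nil =>
        obtain ⟨rfl, rfl⟩ := List.cons.inj h
        exact ⟨[], r, S, rfl, by omega, rfl, by rw [sweepState, if_neg hd]⟩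
      | cons a α =>
        obtain ⟨w₁, w₂, S', rfl, hx, hβ, hst⟩ := ih (List.cons.inj h).2
        exact ⟨y :: w₁, w₂, S', rfl, hx, hβ, by rw [sweepState, if_neg hd, hst]⟩

def Separated (r : Fin n → Fin n → Prop) (w : List (Fin n)) : Prop :=
  ∀ i u, [i] ++ u ++ [i] <:+: w → ∃ j ∈ u, r i j

theorem Separated.of_infix {r : Fin n → Fin n → Prop} {v w : List (Fin n)} (h : Separated r w)
    (hv : v <:+: w) : Separated r v :=
  fun i u hu => h i u (hu.trans hv)

theorem Canonical.separated_lt {c : List (Fin n)} (hc : Canonical c) : Separated (· < ·) c :=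
  fun i u hu => (hc i u hu).1

theorem Canonical.separated_gt {c : List (Fin n)} (hc : Canonical c) :
    Separated (fun i j => j < i) c :=
  fun i u hu => (hc i u hu).2

theorem Separated.cons_of_cons_cons {x b : Fin n} {u : List (Fin n)}
    (h : Separated (· < ·) (x :: b :: u)) (hbx : b ≤ x) : Separated (· < ·) (x :: u) := by
  intro i v hv
  rcases List.infix_cons_iff.1 hv with hv | hv
  · obtain ⟨rfl, hv⟩ := List.cons_prefix_cons.1 (by simpa using hv : i :: (v ++ [i]) <+: x :: u)
    have hbv : [i] ++ b :: v ++ [i] <+: i :: b :: u := by simpa using hv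
    obtain ⟨j, hj, hij⟩ := h i (b :: v) hbv.isInfix
    rcases List.mem_cons.1 hj with rfl | hj
    · exact absurd hij (not_lt.2 hbx)
    · exact ⟨j, hj, hij⟩
  · exact h i v (List.infix_cons (List.infix_cons hv))

theorem cons_sweep_arm_not_sublist {u : List (Fin n)} {τ : ℕ} {x : Fin n} {S : Fin n → Bool}
    (hτ : τ ≤ (x : ℕ) + 1) (hsep : Separated (· < ·) (x :: u)) :
    ¬ x :: sweep τ (arm S x) u <+ u := by
  induction u generalizing x S with
  | nil => exact fun h => List.cons_ne_nil _ _ (List.sublist_nil.1 h)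
  | cons b u ih =>
    intro hsub
    have hbx : b ≠ x := by
      rintro rfl
      obtain ⟨j, hj, -⟩ := hsep b [] ⟨[], u, rfl⟩
      cases hj
    replace hsub := hsub.of_cons_of_ne hbx.symm
    rw [sweep] at hsub
    split_ifs at hsub with hd
    · have hbx' : b ≤ x := by
        rcases hd with hd | hd
        · rw [Fin.le_def]; omega
        · simp only [arm, hbx, decide_false] at hd
          split_ifs at hd with hb
          exact hb.le
      exact ih hτ (hsep.cons_of_cons_cons hbx') hsub
    · exact ih (by omega) (hsep.of_infix (List.suffix_cons x _).isInfix)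
        ((List.sublist_cons_self x _).trans hsub)

theorem cons_append_sweep_not_sublist {τ : ℕ} {S : Fin n → Bool} {P V α β : List (Fin n)}
    {x : Fin n} (hsep : Separated (· < ·) (P ++ V)) (h : sweep τ S P = α ++ x :: β) :
    ¬ x :: (β ++ sweep τ (sweepState τ S P) V) <+ V := by
  obtain ⟨w₁, w₂, S', rfl, hx, rfl, hst⟩ := sweep_eq_append_cons h
  rw [hst, ← sweep_append]
  intro hsub
  have hsep' : Separated (· < ·) (x :: (w₂ ++ V)) := hsep.of_infix ⟨w₁, [], by simp⟩
  exact cons_sweep_arm_not_sublist (by omega) hsep' (hsub.trans (List.sublist_append_right w₂ V))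

def truncIco (m k : ℕ) : List (Fin n) → List (Fin n)
  | [] => []
  | a :: t => if m ≤ (a : ℕ) ∧ (a : ℕ) < k then a :: t else truncIco m k t

theorem truncIco_zero (k : ℕ) (w : List (Fin n)) : truncIco 0 k w = truncLtN k w := by
  induction w with
  | nil => rfl
  | cons a t ih => simp only [truncIco, truncLtN, Nat.zero_le, true_and, ih]

theorem truncIco_eq_append (m k : ℕ) (w : List (Fin n)) :
    ∃ R, w = R ++ truncIco m k w ∧ ∀ x ∈ R, ¬ (m ≤ (x : ℕ) ∧ (x : ℕ) < k) := by
  induction w with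
  | nil => exact ⟨[], rfl, by simp⟩
  | cons a t ih =>
    by_cases ha : m ≤ (a : ℕ) ∧ (a : ℕ) < k
    · exact ⟨[], by simp [truncIco, ha], by simp⟩
    · obtain ⟨R, hR, hRmem⟩ := ih
      refine ⟨a :: R, by rw [truncIco, if_neg ha, List.cons_append, ← hR], ?_⟩
      exact List.forall_mem_cons.2 ⟨ha, hRmem⟩

theorem truncIco_suffix (m k : ℕ) (w : List (Fin n)) : truncIco m k w <:+ w :=
  let ⟨R, hR, _⟩ := truncIco_eq_append m k w
  ⟨R, hR.symm⟩

theorem truncIco_head (m k : ℕ) (w : List (Fin n)) :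
    ∀ h ∈ (truncIco m k w).head?, m ≤ (h : ℕ) ∧ (h : ℕ) < k := by
  induction w with
  | nil => simp [truncIco]
  | cons a t ih =>
    by_cases ha : m ≤ (a : ℕ) ∧ (a : ℕ) < k
    · simp [truncIco, ha]
    · simpa [truncIco, ha] using ih

theorem sweep_truncIco {m k : ℕ} (hk : n ≤ k) (S : Fin n → Bool) (w : List (Fin n)) :
    sweep m S (truncIco m k w) = sweep m S w := by
  induction w with
  | nil => rfl
  | cons a t ih =>
    by_cases ha : m ≤ (a : ℕ) ∧ (a : ℕ) < k
    · rw [truncIco, if_pos ha]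
    · rw [truncIco, if_neg ha, ih, sweep, if_pos (Or.inl (by omega))]

theorem join_cons_sweep_truncIco {m : ℕ} {b : Fin n} {u : List (Fin n)} (hm : m ≤ (b : ℕ))
    (hsep : Separated (· < ·) (b :: u)) :
    join (b :: sweep (b + 1) ⊥ u) (sweep m ⊥ (truncIco m b u)) = sweep m ⊥ (b :: u) := by
  have hhead := truncIco_head m b u
  obtain ⟨R, hR, hRmem⟩ := truncIco_eq_append m b u
  generalize truncIco m b u = V at hR hhead
  subst hR
  have hbR : ∀ x ∈ b :: R, ¬ (m ≤ (x : ℕ) ∧ (x : ℕ) < b) :=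
    List.forall_mem_cons.2 ⟨by omega, hRmem⟩
  have hlhs : b :: sweep (b + 1) ⊥ (R ++ V) =
      sweep b ⊥ (b :: R) ++ sweep b (sweepState b ⊥ (b :: R)) V := by
    rw [← sweep_append, List.cons_append, sweep, if_neg (by simp),
      sweep_eq_of_armed (by simp [arm]),
      sweep_congr (S := arm ⊥ b) (S' := ⊥) fun y hy => arm_apply_of_lt (by rw [Fin.lt_def]; omega)]
  have hstate : ∀ y : Fin n, m ≤ y → y < b → sweepState m ⊥ (b :: R) y = false :=
    fun y _ hyb => sweepState_apply_of_forall_lt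
      (fun x hx hmx => hyb.trans_le (Fin.le_def.2 (not_lt.1 fun h => hbR x hx ⟨hmx, h⟩))) ⊥
  have hrhs : sweep m ⊥ (b :: (R ++ V)) = sweep b ⊥ (b :: R) ++ sweep m ⊥ V := by
    rw [← List.cons_append, sweep_append, sweep_eq_sweep_of_forall_not_mem_Ico hm hbR,
      sweep_eq_sweep_bot hstate hhead]
  rw [hlhs, hrhs]
  refine join_append_of_sublist (sweep_sublist_sweep hm (fun y _ hy => absurd hy (by simp)) V) ?_
  intro α₁ x α₂ h hsub
  exact cons_append_sweep_not_sublist (P := b :: R) hsep h (hsub.trans (sweep_sublist m ⊥ V))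

theorem joinRange_Fword_eq_sweep {c : List (Fin n)} (hc : Canonical c) (m k : ℕ) :
    joinRange m k (Fword c starState) = sweep m ⊥ (truncIco m k c) := by
  induction c generalizing m k with
  | nil => exact joinRange_starState m k
  | cons b u ih =>
    have ih := ih (fun i v hv => hc i v (List.infix_cons hv))
    change joinRange m k (Fstep b (Fword u starState)) = _
    by_cases hb : m ≤ (b : ℕ) ∧ (b : ℕ) < k
    · rw [joinRange_Fstep_of_mem hb.1 hb.2, ih, ih, sweep_truncIco le_rfl, truncIco, if_pos hb]
      exact join_cons_sweep_truncIco hb.1 hc.separated_lt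
    · rw [joinRange_Fstep_of_not_mem hb, ih, truncIco, if_neg hb]

theorem sweep_zero_eq_self {S : Fin n → Bool} {w : List (Fin n)}
    (hsep : Separated (fun i j => j < i) w)
    (hS : ∀ y v, S y → v ++ [y] <+: w → ∃ z ∈ v, z < y) : sweep 0 S w = w := by
  induction w generalizing S with
  | nil => rfl
  | cons x r ih =>
    have hx : ¬ ((x : ℕ) < 0 ∨ S x) := by
      rintro (h | h)
      · omega
      · obtain ⟨z, hz, -⟩ := hS x [] h (by simp)
        cases hz
    rw [sweep, if_neg hx, ih (hsep.of_infix (List.suffix_cons x r).isInfix)]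
    intro y v hy hv
    simp only [arm] at hy
    split_ifs at hy with hyx
    · obtain ⟨z, hz, hzy⟩ := hS y (x :: v) hy (List.cons_prefix_cons.2 ⟨rfl, hv⟩)
      rcases List.mem_cons.1 hz with rfl | hz
      · exact absurd hzy hyx.asymm
      · exact ⟨z, hz, hzy⟩
    · obtain rfl : y = x := of_decide_eq_true hy
      exact hsep y v (List.cons_prefix_cons.2 ⟨rfl, hv⟩).isInfix

theorem stmt_17_general {n : ℕ} (w c : List (Fin n))
    (hc : Canonical c) (hcw : KisEquiv c w)
    (k : ℕ) :
    List.foldr join []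
        ((((List.finRange n).filter (fun m : Fin n => decide ((m : ℕ) < k))).reverse).map
          (Fword w starState))
      = truncLtN k c := by
  have hcoords : (List.finRange n).filter (fun m : Fin n => decide ((m : ℕ) < k)) = coordsIco 0 k :=
    List.filter_congr fun j _ => by simp
  rw [hcoords, ← Fword_eq_of_kisEquiv hcw]
  change joinRange 0 k (Fword c starState) = _
  rw [joinRange_Fword_eq_sweep hc, ← truncIco_zero]
  exact sweep_zero_eq_self (hc.separated_gt.of_infix (truncIco_suffix 0 k c).isInfix)
    fun _ _ h _ => absurd h (by simp)

/-- With `q m = (F_w ⋆) m`, for every `1 ≤ k ≤ n` the nested join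
`join q_{k-1} (join q_{k-2} (⋯ (join q_1 q_0)⋯))` equals `T_{{1,…,k}} Can w`, the longest
suffix of `Can w` whose head is `< k` (or `[]`). -/
theorem stmt_17 {n : ℕ} (hn : 1 ≤ n) (w c : List (Fin n))
    (hc : Canonical c) (hcw : KisEquiv c w)
    (k : ℕ) (hk1 : 1 ≤ k) (hkn : k ≤ n) :
    List.foldr join []
        ((((List.finRange n).filter (fun m : Fin n => decide ((m : ℕ) < k))).reverse).map
          (Fword w starState))
      = truncLtN k c :=
  stmt_17_general w c hc hcw k
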